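/- If φ has a satisfying truth assignment α, then the set K consisting of all log₂(s+1) consistency columns together with, for each i ∈ [log₂ r], one column among B_i's columns whose corresponding assignment agrees with α on the variables of B_i, is a solution for the instance (A, k): |K| = log₂(s+1) + log₂ r = k and the rows of A restricted to K are pairwise distinct. -/

import Mathlib

/-!
The construction of the paper.  Rows and columns are 0-indexed here:
* `r ≥ 2` is a power of two, the number of variables of the CNF formula `φ`;
  variables are elements of `Fin r`; a literal is a variable plus a polarity.
* `s = 2 ^ ℓ - 1` (with `ℓ ≥ 1`) is the number of clauses; clause `q : Fin s`
  is the finite set `Clause q` of literals.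
* `L = log₂ r` is the number of bundles; bundle `i` is a list `B i` of exactly
  `r' = ⌈r / log₂ r⌉` variables (with repetitions allowed), and every variable
  occurs in exactly one bundle.
* For every bundle `i` there is a list of `ρ = 2 ^ r'` truth assignments
  `asg i p : Fin r → Bool` (`p : Fin ρ`, only the values on `B i`'s variables are
  relevant) containing every assignment of `B i`'s variables at least once.
* The matrix `A` has `n = ℓ + ρ * L` columns: the `ℓ` consistency columns
  `0, …, ℓ - 1`, followed, for each bundle `i`, by `B i`'s columns
  `ℓ + i * ρ, …, ℓ + (i + 1) * ρ - 1` (the `p`-th corresponding to assignment `p`).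
* The matrix `A` has `m = 1 + L + 2 * s` rows: the all-zero row `0`, the bundle
  indicator rows `1, …, L` (row `i + 1` is `1` exactly on bundle `i`'s columns),
  and, for each clause `q : Fin s`, the odd row `1 + L + 2 * q` (the `ℓ`-bit binary
  encoding of `q + 1` on the consistency columns and `sat_i(p, q)` on the `p`-th of
  bundle `i`'s columns) and the even row `1 + L + 2 * q + 1` (the encoding of `q + 1`
  on the consistency columns and `0` elsewhere).
* `k = ℓ + L`.  A solution is a set `K` of at most `k` columns such that the rows
  of `A` restricted to the columns in `K` are pairwise distinct.
-/

/-- A literal over variables `Fin r`: a variable together with a polarity. -/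
structure DVLit (r : ℕ) where
  var : Fin r
  pos : Bool
deriving DecidableEq

/-- All the data of the construction: the CNF formula `φ` (variables, clauses),
the bundles, and the lists of truth assignments of each bundle. -/
structure DVInstance where
  /-- number of variables -/
  r : ℕ
  hr : 2 ≤ r
  hrpow : ∃ t : ℕ, r = 2 ^ t
  ℓ : ℕ
  hℓ : 1 ≤ ℓ
  /-- number of clauses -/
  s : ℕ
  hs : s = 2 ^ ℓ - 1
  /-- the clauses of `φ` -/
  Clause : Fin s → Finset (DVLit r)
  /-- the bundles: lists of variables of length `r' = ⌈r / log₂ r⌉` -/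
  B : Fin (Nat.log 2 r) → List (Fin r)
  hBlen : ∀ i, (B i).length = (r + Nat.log 2 r - 1) / Nat.log 2 r
  /-- every variable occurs in exactly one bundle -/
  hBpart : ∀ v : Fin r, ∃! i, v ∈ B i
  /-- the list of `ρ = 2 ^ r'` truth assignments of each bundle -/
  asg : Fin (Nat.log 2 r) → Fin (2 ^ ((r + Nat.log 2 r - 1) / Nat.log 2 r)) →
    Fin r → Bool
  /-- every assignment of a bundle's variables occurs at least once in its list -/
  hasg : ∀ i, ∀ β : Fin r → Bool, ∃ p, ∀ v ∈ B i, asg i p v = β v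

namespace DVInstance

variable (D : DVInstance)

/-- `L = log₂ r`, the number of bundles. -/
def L : ℕ := Nat.log 2 D.r

/-- `r' = ⌈r / log₂ r⌉`, the size of each bundle. -/
def r' : ℕ := (D.r + D.L - 1) / D.L

/-- `ρ = 2 ^ r'`, the number of columns of each bundle. -/
def ρ : ℕ := 2 ^ D.r'

/-- the number `n = log₂(s + 1) + ρ * log₂ r` of columns of `A`. -/
def n : ℕ := D.ℓ + D.ρ * D.L

/-- the number `m = 1 + log₂ r + 2 * s` of rows of `A`. -/
def m : ℕ := 1 + D.L + 2 * D.s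

/-- the budget `k = log₂(s + 1) + log₂ r`. -/
def k : ℕ := D.ℓ + D.L

/-- `sat_i(p, q)`: whether the `p`-th assignment of bundle `i` makes clause `q` true,
i.e. whether some literal of clause `q` whose variable belongs to bundle `i` is set
to its polarity by the `p`-th assignment of bundle `i` (nat-indexed version;
`false` outside the index ranges). -/
def satN (i p q : ℕ) : Bool :=
  if h : i < D.L ∧ p < D.ρ ∧ q < D.s then
    decide (∃ lit ∈ D.Clause ⟨q, h.2.2⟩, lit.var ∈ D.B ⟨i, h.1⟩ ∧
      D.asg ⟨i, h.1⟩ ⟨p, h.2.1⟩ lit.var = lit.pos)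
  else false

/-- The constructed binary matrix `A` (rows and columns 0-indexed;
entries outside the `m × n` range are irrelevant). -/
def A (row col : ℕ) : Bool :=
  if row = 0 then
    -- the all-zero row
    false
  else if row ≤ D.L then
    -- bundle indicator rows: row `i + 1` is `1` exactly on bundle `i`'s columns
    decide (D.ℓ + (row - 1) * D.ρ ≤ col ∧ col < D.ℓ + row * D.ρ)
  else if col < D.ℓ then
    -- clause rows on the consistency columns: the binary encoding of the
    -- (1-indexed) clause number
    Nat.testBit ((row - D.L - 1) / 2 + 1) col
  else if (row - D.L - 1) % 2 = 0 then
    -- odd row of clause `q = (row - L - 1) / 2`: `sat_i(p, q)` on the `p`-th of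
    -- bundle `i`'s columns
    D.satN ((col - D.ℓ) / D.ρ) ((col - D.ℓ) % D.ρ) ((row - D.L - 1) / 2)
  else
    -- even row of clause `q`: zero outside the consistency columns
    false

/-- `K` is a solution for the instance `(A, k)`: a set of at most `k` columns of `A`
such that the rows of `A` restricted to the columns in `K` are pairwise distinct. -/
def Solution (K : Finset ℕ) : Prop :=
  (∀ c ∈ K, c < D.n) ∧ K.card ≤ D.k ∧
    ∀ i j, i < D.m → j < D.m → i ≠ j → ∃ c ∈ K, D.A i c ≠ D.A j c

end DVInstance

/-!
On the consistency columns every row spells out in binary a code below `2 ^ ℓ`: `0` on the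
zero row and the bundle rows, `q + 1` on both rows of clause `q`; so these columns separate
rows with different codes. Among the first `1 + L` rows, the chosen column of bundle `i` is
`1` only on row `i + 1`. The two rows of clause `q` agree everywhere except on the odd row's
`sat` entries: pick a literal of `C_q` made true by `α` and the bundle `i` containing its
variable; the chosen column of bundle `i` agrees with `α` there, so the odd row reads `1` and
the even row `0` in that column.
-/

theorem Nat.eq_of_testBit_eq_of_lt_two_pow {a b l : ℕ} (ha : a < 2 ^ l) (hb : b < 2 ^ l)
    (h : ∀ c < l, a.testBit c = b.testBit c) : a = b := by
  rw [← Nat.mod_eq_of_lt ha, ← Nat.mod_eq_of_lt hb]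
  refine Nat.eq_of_testBit_eq fun c => ?_
  simp only [Nat.testBit_mod_two_pow]
  by_cases hc : c < l <;> simp [hc, h]

namespace DVInstance

variable (D : DVInstance)

theorem ρ_pos : 0 < D.ρ := Nat.two_pow_pos _

def bundleCol (i p : ℕ) : ℕ := D.ℓ + i * D.ρ + p

def selectedCols (f : Fin D.L → Fin D.ρ) : Finset ℕ :=
  Finset.range D.ℓ ∪ Finset.univ.image fun i : Fin D.L => D.bundleCol i (f i)

/-- The number written in binary on the consistency columns of a row. -/
def consistencyCode (x : ℕ) : ℕ := if x ≤ D.L then 0 else (x - D.L - 1) / 2 + 1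

variable {D}

theorem le_bundleCol (i p : ℕ) : D.ℓ ≤ D.bundleCol i p := by
  unfold bundleCol; omega

theorem bundleCol_div {i p : ℕ} (hp : p < D.ρ) : (D.bundleCol i p - D.ℓ) / D.ρ = i := by
  rw [bundleCol, Nat.add_assoc, Nat.add_sub_cancel_left, mul_comm,
    Nat.mul_add_div D.ρ_pos, Nat.div_eq_of_lt hp, add_zero]

theorem bundleCol_mod {i p : ℕ} (hp : p < D.ρ) : (D.bundleCol i p - D.ℓ) % D.ρ = p := by
  rw [bundleCol, Nat.add_assoc, Nat.add_sub_cancel_left, mul_comm, Nat.mul_add_mod,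
    Nat.mod_eq_of_lt hp]

theorem bundleCol_lt_bundleCol {i j p p' : ℕ} (hij : i < j) (hp : p < D.ρ) :
    D.bundleCol i p < D.bundleCol j p' := by
  have : (i + 1) * D.ρ ≤ j * D.ρ := Nat.mul_le_mul_right _ hij
  unfold bundleCol
  nlinarith

theorem bundleCol_lt_n {i p : ℕ} (hi : i < D.L) (hp : p < D.ρ) : D.bundleCol i p < D.n := by
  simpa [bundleCol, n, mul_comm] using D.bundleCol_lt_bundleCol (p' := 0) hi hp

theorem bundleCol_mem_selectedCols (f : Fin D.L → Fin D.ρ) (i : Fin D.L) :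
    D.bundleCol i (f i) ∈ D.selectedCols f :=
  Finset.mem_union_right _ (Finset.mem_image_of_mem _ (Finset.mem_univ i))

theorem card_selectedCols (f : Fin D.L → Fin D.ρ) : (D.selectedCols f).card = D.k := by
  have hinj : Function.Injective fun i : Fin D.L => D.bundleCol i (f i) :=
    StrictMono.injective fun i j hij => D.bundleCol_lt_bundleCol hij (f i).isLt
  have hdisj : Disjoint (Finset.range D.ℓ)
      (Finset.univ.image fun i : Fin D.L => D.bundleCol i (f i)) := by
    refine Finset.disjoint_left.2 fun c hc hc' => ?_
    obtain ⟨i, -, rfl⟩ := Finset.mem_image.1 hc'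
    exact (Finset.mem_range.1 hc).not_ge (le_bundleCol _ _)
  rw [selectedCols, Finset.card_union_of_disjoint hdisj, Finset.card_range,
    Finset.card_image_of_injective _ hinj, Finset.card_univ, Fintype.card_fin, k]

theorem consistencyCode_lt_two_pow {x : ℕ} (hx : x < D.m) : D.consistencyCode x < 2 ^ D.ℓ := by
  have hs := D.hs
  have : 1 ≤ 2 ^ D.ℓ := Nat.one_le_two_pow
  unfold consistencyCode m at *
  split_ifs <;> omega

theorem A_of_lt_ℓ (x : ℕ) {c : ℕ} (hc : c < D.ℓ) :
    D.A x c = (D.consistencyCode x).testBit c := by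
  unfold A consistencyCode
  split_ifs <;> simp only [Nat.zero_testBit, Bool.false_eq, decide_eq_false_iff_not] <;> omega

theorem A_bundleCol_of_le_L {x i p : ℕ} (hx : x ≤ D.L) (hp : p < D.ρ) :
    D.A x (D.bundleCol i p) = decide (x = i + 1) := by
  rcases x with _ | j
  · simp [A]
  have hℓ := le_bundleCol (D := D) i p
  unfold A
  rw [if_neg j.succ_ne_zero, if_pos hx, Nat.add_sub_cancel]
  refine decide_eq_decide.2 ⟨fun ⟨hlo, hhi⟩ => ?_, fun h => ?_⟩
  · have : (D.bundleCol i p - D.ℓ) / D.ρ = j := Nat.div_eq_of_lt_le (by omega) (by omega)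
    rw [bundleCol_div hp] at this
    omega
  · obtain rfl : j = i := by omega
    unfold bundleCol
    rw [add_one_mul]
    omega

theorem A_bundleCol_of_L_lt {x i p : ℕ} (hx : D.L < x) (hp : p < D.ρ) :
    D.A x (D.bundleCol i p) =
      (decide ((x - D.L - 1) % 2 = 0) && D.satN i p ((x - D.L - 1) / 2)) := by
  have hℓ := le_bundleCol (D := D) i p
  unfold A
  rw [if_neg (by omega), if_neg (by omega), if_neg (by omega), bundleCol_div hp,
    bundleCol_mod hp]
  split_ifs with h <;> simp [h]

theorem exists_satN_eq_true {α : Fin D.r → Bool}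
    (hα : ∀ q : Fin D.s, ∃ lit ∈ D.Clause q, α lit.var = lit.pos)
    {f : Fin D.L → Fin D.ρ} (hf : ∀ i, ∀ v ∈ D.B i, D.asg i (f i) v = α v) (q : Fin D.s) :
    ∃ i : Fin D.L, D.satN i (f i) q = true := by
  obtain ⟨lit, hlit, hpos⟩ := hα q
  obtain ⟨i, hi, -⟩ := D.hBpart lit.var
  refine ⟨i, ?_⟩
  rw [satN, dif_pos ⟨i.isLt, (f i).isLt, q.isLt⟩]
  exact decide_eq_true ⟨lit, hlit, hi, (hf i lit.var hi).trans hpos⟩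

theorem eq_of_forall_A_eq_on_selectedCols {α : Fin D.r → Bool}
    (hα : ∀ q : Fin D.s, ∃ lit ∈ D.Clause q, α lit.var = lit.pos)
    {f : Fin D.L → Fin D.ρ} (hf : ∀ i, ∀ v ∈ D.B i, D.asg i (f i) v = α v)
    {x y : ℕ} (hx : x < D.m) (hy : y < D.m) (h : ∀ c ∈ D.selectedCols f, D.A x c = D.A y c) :
    x = y := by
  have hcode : D.consistencyCode x = D.consistencyCode y :=
    Nat.eq_of_testBit_eq_of_lt_two_pow (consistencyCode_lt_two_pow hx)
      (consistencyCode_lt_two_pow hy) fun c hc => by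
        rw [← A_of_lt_ℓ x hc, ← A_of_lt_ℓ y hc]
        exact h c (Finset.mem_union_left _ (Finset.mem_range.2 hc))
  have hcol (i : Fin D.L) := h _ (D.bundleCol_mem_selectedCols f i)
  unfold consistencyCode at hcode
  by_cases hxL : x ≤ D.L <;> by_cases hyL : y ≤ D.L <;> simp only [hxL, hyL, if_true,
    if_false] at hcode
  · by_contra hne
    -- the larger of the two rows is a bundle indicator row, the smaller is not
    have := hcol ⟨max x y - 1, by omega⟩
    rw [A_bundleCol_of_le_L hxL (f _).isLt, A_bundleCol_of_le_L hyL (f _).isLt] at this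
    simp only [decide_eq_decide] at this
    omega
  · omega
  · omega
  · obtain ⟨i, hi⟩ := exists_satN_eq_true hα hf ⟨(y - D.L - 1) / 2, by unfold m at hy; omega⟩
    have := hcol i
    rw [A_bundleCol_of_L_lt (by omega) (f i).isLt, A_bundleCol_of_L_lt (by omega) (f i).isLt,
      show (x - D.L - 1) / 2 = (y - D.L - 1) / 2 by omega, hi] at this
    simp only [Bool.and_true, decide_eq_decide] at this
    omega

theorem selectedCols_solution {α : Fin D.r → Bool}
    (hα : ∀ q : Fin D.s, ∃ lit ∈ D.Clause q, α lit.var = lit.pos)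
    {f : Fin D.L → Fin D.ρ} (hf : ∀ i, ∀ v ∈ D.B i, D.asg i (f i) v = α v) :
    D.Solution (D.selectedCols f) := by
  refine ⟨fun c hc => ?_, (D.card_selectedCols f).le, fun x y hx hy hne => ?_⟩
  · rcases Finset.mem_union.1 hc with hc | hc
    · exact (Finset.mem_range.1 hc).trans_le (Nat.le_add_right _ _)
    · obtain ⟨i, -, rfl⟩ := Finset.mem_image.1 hc
      exact bundleCol_lt_n i.isLt (f i).isLt
  · by_contra! hagree
    exact hne (eq_of_forall_A_eq_on_selectedCols hα hf hx hy hagree)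

end DVInstance

/-- If `α` is a satisfying assignment of `φ` and, for each bundle `i`,
`f i` is (the index of) a column among `B i`'s columns whose corresponding assignment
agrees with `α` on the variables of `B i`, then the set `K` consisting of all `ℓ`
consistency columns together with the columns `f i` has exactly
`k = log₂(s + 1) + log₂ r` elements and is a solution for `(A, k)`. -/
theorem satisfiable_implies_solution (D : DVInstance) (α : Fin D.r → Bool)
    (hα : ∀ q : Fin D.s, ∃ lit ∈ D.Clause q, α lit.var = lit.pos)
    (f : Fin D.L → Fin D.ρ)
    (hf : ∀ i, ∀ v ∈ D.B i, D.asg i (f i) v = α v) :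
    (Finset.range D.ℓ ∪
        Finset.image (fun i : Fin D.L => D.ℓ + i.val * D.ρ + (f i).val)
          Finset.univ).card = D.k ∧
    D.Solution (Finset.range D.ℓ ∪
      Finset.image (fun i : Fin D.L => D.ℓ + i.val * D.ρ + (f i).val)
        Finset.univ) :=
  ⟨D.card_selectedCols f, D.selectedCols_solution hα hf⟩
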